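/- arXiv:1104.0696 — 6 statements merged into one kernel-verified Lean document; each statement's English description precedes it below -/
import Mathlib

section
/- In any associative unital ℂ-algebra A whose elements b_i^ξ, f_α^η satisfy the defining relations of the relative parabose set P_BF, the parafermionic bilinears close under the commutator: for all α,β,γ,δ' ∈ J and all ξ,η,ε,φ ∈ {1,−1}, [[f_α^ξ, f_β^η], [f_γ^ε, f_{δ'}^φ]] = ½(φ−η)² δ_{β δ'} [f_γ^ε, f_α^ξ] + ½(φ−ξ)² δ_{α δ'} [f_β^η, f_γ^ε] + ½(ε−η)² δ_{βγ} [f_α^ξ, f_{δ'}^φ] + ½(ε−ξ)² δ_{αγ} [f_{δ'}^φ, f_β^η]. -/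
/-- The commutator `[x, y] = x*y - y*x`. -/
def pbComm {A : Type*} [Ring A] (x y : A) : A := x * y - y * x

/-- The anticommutator `{x, y} = x*y + y*x`. -/
def pbAComm {A : Type*} [Ring A] (x y : A) : A := x * y + y * x

/-- Kronecker delta with values in `ℂ`. -/
def kd {I : Type*} [DecidableEq I] (i j : I) : ℂ := if i = j then 1 else 0

/-- A sign, i.e. `+1` or `-1`, regarded as an integer. -/
def IsSign (x : ℤ) : Prop := x = 1 ∨ x = -1

/-- The defining trilinear relations of the relative parabose set `P_BF`,
for a family `b` of parabosonic and `f` of parafermionic generators. -/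
structure PBFRelations {A : Type*} [Ring A] [Algebra ℂ A]
    {I J : Type*} [DecidableEq I] [DecidableEq J]
    (b : I → ℤ → A) (f : J → ℤ → A) : Prop where
  rel_bbb : ∀ (i j k : I) (ξ η ε : ℤ), IsSign ξ → IsSign η → IsSign ε →
    pbComm (pbAComm (b i ξ) (b j η)) (b k ε)
      = (((ε - η : ℤ) : ℂ) * kd j k) • b i ξ + (((ε - ξ : ℤ) : ℂ) * kd i k) • b j η
  rel_fff : ∀ (α β γ : J) (ξ η ε : ℤ), IsSign ξ → IsSign η → IsSign ε →
    pbComm (pbComm (f α ξ) (f β η)) (f γ ε)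
      = ((((ε - η) ^ 2 : ℤ) : ℂ) / 2 * kd β γ) • f α ξ
        - ((((ε - ξ) ^ 2 : ℤ) : ℂ) / 2 * kd α γ) • f β η
  rel_bbf : ∀ (i j : I) (α : J) (ξ η ε : ℤ), IsSign ξ → IsSign η → IsSign ε →
    pbComm (pbAComm (b i ξ) (b j η)) (f α ε) = 0
  rel_ffb : ∀ (α β : J) (i : I) (ξ η ε : ℤ), IsSign ξ → IsSign η → IsSign ε →
    pbComm (pbComm (f α ξ) (f β η)) (b i ε) = 0
  rel_fbb : ∀ (α : J) (i j : I) (ξ η ε : ℤ), IsSign ξ → IsSign η → IsSign ε →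
    pbComm (pbAComm (f α ξ) (b i η)) (b j ε) = (((ε - η : ℤ) : ℂ) * kd i j) • f α ξ
  rel_bff : ∀ (i : I) (α β : J) (ξ η ε : ℤ), IsSign ξ → IsSign η → IsSign ε →
    pbAComm (pbAComm (b i ξ) (f α η)) (f β ε) = ((((ε - η) ^ 2 : ℤ) : ℂ) / 2 * kd α β) • b i ξ

attribute [local instance] LieRing.ofAssociativeRing

lemma pbComm_eq_lie {A : Type*} [Ring A] (x y : A) : pbComm x y = ⁅x, y⁆ :=
  (Ring.lie_def x y).symm

/-- The parafermionic bilinears close under the commutator. -/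
theorem parafermi_bilinears_close {A : Type*} [Ring A] [Algebra ℂ A]
    {I J : Type*} [DecidableEq I] [DecidableEq J]
    (b : I → ℤ → A) (f : J → ℤ → A) (h : PBFRelations b f) :
    ∀ (α β γ δ' : J) (ξ η ε φ : ℤ), IsSign ξ → IsSign η → IsSign ε → IsSign φ →
      pbComm (pbComm (f α ξ) (f β η)) (pbComm (f γ ε) (f δ' φ))
        = ((((φ - η) ^ 2 : ℤ) : ℂ) / 2 * kd β δ') • pbComm (f γ ε) (f α ξ)
          + ((((φ - ξ) ^ 2 : ℤ) : ℂ) / 2 * kd α δ') • pbComm (f β η) (f γ ε)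
          + ((((ε - η) ^ 2 : ℤ) : ℂ) / 2 * kd β γ) • pbComm (f α ξ) (f δ' φ)
          + ((((ε - ξ) ^ 2 : ℤ) : ℂ) / 2 * kd α γ) • pbComm (f δ' φ) (f β η) := by
  intro α β γ δ' ξ η ε φ hξ hη hε hφ
  have hγ := h.rel_fff α β γ ξ η ε hξ hη hε
  have hδ := h.rel_fff α β δ' ξ η φ hξ hη hφ
  simp only [pbComm_eq_lie] at hγ hδ ⊢
  -- `ad [f_α^ξ, f_β^η]` is a derivation, and `rel_fff` is its action on each generator.
  rw [leibniz_lie, hγ, hδ, ← lie_skew (f δ' φ), ← lie_skew (f β η) (f γ ε)]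
  simp only [sub_lie, lie_sub, smul_lie, lie_smul]
  module
end

section
/- In any associative unital ℂ-algebra A whose elements b_i^ξ, f_α^η satisfy the defining relations of the relative parabose set P_BF, the mixed bilinears satisfy the Lie-superalgebra multiplication rules: for all i,j,l ∈ I, α,β,γ ∈ J and all ξ,η,ε,φ ∈ {1,−1}: (i) [{b_i^ξ, b_j^η}, [f_α^ε, f_β^φ]] = 0; (ii) [{b_i^ξ, b_j^η}, {f_α^ε, b_l^φ}] = (φ−η)δ_{jl}{f_α^ε, b_i^ξ} + (φ−ξ)δ_{il}{f_α^ε, b_j^η}; (iii) [[f_α^ξ, f_β^η], {f_γ^ε, b_l^φ}] = ½(ε−η)²δ_{βγ}{f_α^ξ, b_l^φ} − ½(ε−ξ)²δ_{αγ}{f_β^η, b_l^φ}; (iv) {{f_α^ξ, b_l^η}, {f_β^ε, b_j^φ}} = (φ−η)δ_{jl}[f_α^ξ, f_β^ε] + ½(ε−ξ)²δ_{αβ}{b_l^η, b_j^φ}. -/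
/-!
Each rule is obtained by letting the outer (anti)commutator act on the inner bilinear through
the appropriate super-Jacobi identity, which splits it into two triple brackets of the generators;
each of these is given by one defining relation of `P_BF`, and bilinearity collects the terms.
-/

section Identities

variable {A : Type*} [Ring A]

theorem pbAComm_comm (x y : A) : pbAComm x y = pbAComm y x :=
  add_comm _ _

theorem pbComm_pbComm_right (x y z : A) :
    pbComm x (pbComm y z) = pbComm (pbComm x y) z + pbComm y (pbComm x z) := by
  unfold pbComm; noncomm_ring

theorem pbComm_pbAComm_right (x y z : A) :
    pbComm x (pbAComm y z) = pbAComm (pbComm x y) z + pbAComm y (pbComm x z) := by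
  unfold pbComm pbAComm; noncomm_ring

theorem pbAComm_pbAComm_right (x y z : A) :
    pbAComm x (pbAComm y z) = pbAComm (pbAComm x y) z + pbComm (pbComm x z) y := by
  unfold pbComm pbAComm; noncomm_ring

@[simp] theorem pbComm_zero_left (y : A) : pbComm 0 y = 0 := by simp [pbComm]

@[simp] theorem pbComm_zero_right (x : A) : pbComm x 0 = 0 := by simp [pbComm]

@[simp] theorem pbAComm_zero_left (y : A) : pbAComm 0 y = 0 := by simp [pbAComm]

@[simp] theorem pbAComm_zero_right (x : A) : pbAComm x 0 = 0 := by simp [pbAComm]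

theorem pbAComm_add_right (x y z : A) : pbAComm x (y + z) = pbAComm x y + pbAComm x z := by
  unfold pbAComm; noncomm_ring

theorem pbAComm_sub_left (x y z : A) : pbAComm (x - y) z = pbAComm x z - pbAComm y z := by
  unfold pbAComm; noncomm_ring

variable {R : Type*} [CommSemiring R] [Algebra R A]

theorem pbComm_smul_left (r : R) (x y : A) : pbComm (r • x) y = r • pbComm x y := by
  simp only [pbComm, smul_mul_assoc, mul_smul_comm, smul_sub]

theorem pbAComm_smul_left (r : R) (x y : A) : pbAComm (r • x) y = r • pbAComm x y := by
  simp only [pbAComm, smul_mul_assoc, mul_smul_comm, smul_add]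

theorem pbAComm_smul_right (r : R) (x y : A) : pbAComm x (r • y) = r • pbAComm x y := by
  simp only [pbAComm, smul_mul_assoc, mul_smul_comm, smul_add]

end Identities

theorem kd_comm {I : Type*} [DecidableEq I] (i j : I) : kd i j = kd j i := by
  simp [kd, eq_comm]

namespace PBFRelations

variable {A : Type*} [Ring A] [Algebra ℂ A] {I J : Type*} [DecidableEq I] [DecidableEq J]
  {b : I → ℤ → A} {f : J → ℤ → A} {i j l : I} {α β γ : J} {ξ η ε φ : ℤ}

theorem pbComm_bb_ff (h : PBFRelations b f) (hξ : IsSign ξ) (hη : IsSign η) (hε : IsSign ε)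
    (hφ : IsSign φ) : pbComm (pbAComm (b i ξ) (b j η)) (pbComm (f α ε) (f β φ)) = 0 := by
  rw [pbComm_pbComm_right, h.rel_bbf i j α ξ η ε hξ hη hε, h.rel_bbf i j β ξ η φ hξ hη hφ,
    pbComm_zero_left, pbComm_zero_right, add_zero]

theorem pbComm_bb_fb (h : PBFRelations b f) (hξ : IsSign ξ) (hη : IsSign η) (hε : IsSign ε)
    (hφ : IsSign φ) :
    pbComm (pbAComm (b i ξ) (b j η)) (pbAComm (f α ε) (b l φ))
      = (((φ - η : ℤ) : ℂ) * kd j l) • pbAComm (f α ε) (b i ξ)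
        + (((φ - ξ : ℤ) : ℂ) * kd i l) • pbAComm (f α ε) (b j η) := by
  rw [pbComm_pbAComm_right, h.rel_bbf i j α ξ η ε hξ hη hε, h.rel_bbb i j l ξ η φ hξ hη hφ,
    pbAComm_zero_left, zero_add, pbAComm_add_right, pbAComm_smul_right, pbAComm_smul_right]

theorem pbComm_ff_fb (h : PBFRelations b f) (hξ : IsSign ξ) (hη : IsSign η) (hε : IsSign ε)
    (hφ : IsSign φ) :
    pbComm (pbComm (f α ξ) (f β η)) (pbAComm (f γ ε) (b l φ))
      = ((((ε - η) ^ 2 : ℤ) : ℂ) / 2 * kd β γ) • pbAComm (f α ξ) (b l φ)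
        - ((((ε - ξ) ^ 2 : ℤ) : ℂ) / 2 * kd α γ) • pbAComm (f β η) (b l φ) := by
  rw [pbComm_pbAComm_right, h.rel_fff α β γ ξ η ε hξ hη hε, h.rel_ffb α β l ξ η φ hξ hη hφ,
    pbAComm_zero_right, add_zero, pbAComm_sub_left, pbAComm_smul_left, pbAComm_smul_left]

theorem pbAComm_fb_fb (h : PBFRelations b f) (hξ : IsSign ξ) (hη : IsSign η) (hε : IsSign ε)
    (hφ : IsSign φ) :
    pbAComm (pbAComm (f α ξ) (b l η)) (pbAComm (f β ε) (b j φ))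
      = (((φ - η : ℤ) : ℂ) * kd j l) • pbComm (f α ξ) (f β ε)
        + ((((ε - ξ) ^ 2 : ℤ) : ℂ) / 2 * kd α β) • pbAComm (b l η) (b j φ) := by
  rw [pbAComm_pbAComm_right, h.rel_fbb α l j ξ η φ hξ hη hφ, pbAComm_comm (f α ξ),
    h.rel_bff l α β η ξ ε hη hξ hε, pbAComm_smul_left, pbComm_smul_left, kd_comm l j, add_comm]

end PBFRelations

/-- The mixed bilinears satisfy the Lie-superalgebra multiplication rules. -/
theorem mixed_bilinears_rules {A : Type*} [Ring A] [Algebra ℂ A]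
    {I J : Type*} [DecidableEq I] [DecidableEq J]
    (b : I → ℤ → A) (f : J → ℤ → A) (h : PBFRelations b f) :
    ∀ (i j l : I) (α β γ : J) (ξ η ε φ : ℤ), IsSign ξ → IsSign η → IsSign ε → IsSign φ →
      (pbComm (pbAComm (b i ξ) (b j η)) (pbComm (f α ε) (f β φ)) = 0) ∧
      (pbComm (pbAComm (b i ξ) (b j η)) (pbAComm (f α ε) (b l φ))
        = (((φ - η : ℤ) : ℂ) * kd j l) • pbAComm (f α ε) (b i ξ)
          + (((φ - ξ : ℤ) : ℂ) * kd i l) • pbAComm (f α ε) (b j η)) ∧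
      (pbComm (pbComm (f α ξ) (f β η)) (pbAComm (f γ ε) (b l φ))
        = ((((ε - η) ^ 2 : ℤ) : ℂ) / 2 * kd β γ) • pbAComm (f α ξ) (b l φ)
          - ((((ε - ξ) ^ 2 : ℤ) : ℂ) / 2 * kd α γ) • pbAComm (f β η) (b l φ)) ∧
      (pbAComm (pbAComm (f α ξ) (b l η)) (pbAComm (f β ε) (b j φ))
        = (((φ - η : ℤ) : ℂ) * kd j l) • pbComm (f α ξ) (f β ε)
          + ((((ε - ξ) ^ 2 : ℤ) : ℂ) / 2 * kd α β) • pbAComm (b l η) (b j φ)) := by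
  intro i j l α β γ ξ η ε φ hξ hη hε hφ
  exact ⟨h.pbComm_bb_ff hξ hη hε hφ, h.pbComm_bb_fb hξ hη hε hφ, h.pbComm_ff_fb hξ hη hε hφ,
    h.pbAComm_fb_fb hξ hη hε hφ⟩
end

section
/- Let A be a (not necessarily commutative) unital ring and let Q⁻, f⁺, b⁺, R⁺ ∈ A satisfy Q⁻f⁺ + f⁺Q⁻ = b⁺, b⁺f⁺ + f⁺b⁺ = 2R⁺, and R⁺f⁺ + f⁺R⁺ = 0. Then for every natural number m ≥ 2, Q⁻(f⁺)^m = (−1)^m (f⁺)^m Q⁻ + m(−1)^{m−1} (f⁺)^{m−1} b⁺ + m(m−1)(−1)^m (f⁺)^{m−2} R⁺. -/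
/-!
Write `D x = x f + f x`. Right multiplication by `f` is `D` plus left multiplication by `-f`,
and these two additive endomorphisms commute, so the binomial theorem gives
`x fⁿ = ∑ₖ C(n, k) (-f)ⁿ⁻ᵏ Dᵏ x`. For `x = Q⁻` we have `D Q⁻ = b⁺`, `D² Q⁻ = 2R⁺` and
`D³ Q⁻ = 0`, so only three terms survive, and `2 C(m, 2) = m (m - 1)`.
-/

open Finset LinearMap

section Anticommutator

variable {A : Type*} [Ring A]

def anticommutator (f : A) : Module.End ℤ A := mulRight ℤ f + mulLeft ℤ f

@[simp]
theorem anticommutator_apply (f x : A) : anticommutator f x = x * f + f * x := rfl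

theorem commute_anticommutator_mulLeft_neg (f : A) :
    Commute (anticommutator f) (mulLeft ℤ (-f)) := by
  ext x
  simp only [Module.End.mul_apply, anticommutator_apply, mulLeft_apply]
  noncomm_ring

theorem mul_pow_eq_sum_anticommutator (x f : A) (n : ℕ) :
    x * f ^ n =
      ∑ k ∈ range (n + 1), (n.choose k : A) * ((-f) ^ (n - k) * (anticommutator f ^ k) x) := by
  have hcomm := commute_anticommutator_mulLeft_neg f
  have hsplit : mulRight ℤ f = anticommutator f + mulLeft ℤ (-f) := by
    ext y
    simp
  calc x * f ^ n = (mulRight ℤ f ^ n) x := by rw [pow_mulRight, mulRight_apply]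
    _ = _ := by
      rw [hsplit, hcomm.add_pow, LinearMap.sum_apply]
      refine sum_congr rfl fun k _ => ?_
      rw [(hcomm.pow_pow k (n - k)).eq, pow_mulLeft]
      simp only [Module.End.mul_apply, Module.End.natCast_apply, map_nsmul, mulLeft_apply]
      rw [nsmul_eq_mul]

theorem mul_pow_add_two_of_anticommutator_pow_three_eq_zero {x f : A}
    (hx : (anticommutator f ^ 3) x = 0) (n : ℕ) :
    x * f ^ (n + 2) =
      (-f) ^ (n + 2) * x + ((n + 2 : ℕ) : A) * ((-f) ^ (n + 1) * anticommutator f x)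
        + ((n + 2).choose 2 : A) * ((-f) ^ n * (anticommutator f ^ 2) x) := by
  have hvanish : ∀ k, (anticommutator f ^ (k + 3)) x = 0 := fun k => by
    rw [pow_add, Module.End.mul_apply, hx, map_zero]
  rw [mul_pow_eq_sum_anticommutator, sum_range_succ', sum_range_succ', sum_range_succ']
  simp [hvanish]
  abel

end Anticommutator

/-- If `Q⁻f⁺ + f⁺Q⁻ = b⁺`, `b⁺f⁺ + f⁺b⁺ = 2R⁺` and `R⁺f⁺ + f⁺R⁺ = 0` in a unital ring,
then for every `m ≥ 2`,
`Q⁻(f⁺)^m = (−1)^m (f⁺)^m Q⁻ + m(−1)^{m−1} (f⁺)^{m−1} b⁺ + m(m−1)(−1)^m (f⁺)^{m−2} R⁺`. -/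
theorem Qminus_fplus_pow_closed {A : Type*} [Ring A] (Qm fp bp Rp : A)
    (h1 : Qm * fp + fp * Qm = bp) (h2 : bp * fp + fp * bp = 2 * Rp)
    (h3 : Rp * fp + fp * Rp = 0)
    (m : ℕ) (hm : 2 ≤ m) :
    Qm * fp ^ m
      = (-1 : A) ^ m * fp ^ m * Qm
        + (m : A) * (-1 : A) ^ (m - 1) * fp ^ (m - 1) * bp
        + (m : A) * ((m : A) - 1) * (-1 : A) ^ m * fp ^ (m - 2) * Rp := by
  have hchoose : (2 * m.choose 2 : A) = m * (m - 1) := by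
    rw [← Nat.cast_descFactorial_two, Nat.descFactorial_eq_factorial_mul_choose]
    simp [Nat.factorial_two]
  obtain ⟨n, rfl⟩ : ∃ n, m = n + 2 := ⟨m - 2, by omega⟩
  have hD1 : anticommutator fp Qm = bp := h1
  have hD2 : (anticommutator fp ^ 2) Qm = 2 * Rp := by
    rw [pow_two, Module.End.mul_apply, hD1]
    exact h2
  have hD3 : (anticommutator fp ^ 3) Qm = 0 := by
    rw [pow_succ', Module.End.mul_apply, hD2, two_mul, map_add, anticommutator_apply, h3,
      add_zero]
  rw [mul_pow_add_two_of_anticommutator_pow_three_eq_zero hD3, hD1, hD2, ← hchoose]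
  simp only [neg_pow fp, Nat.reduceSubDiff, Nat.add_sub_cancel, pow_succ]
  noncomm_ring
end

section
/- Let A be a (not necessarily commutative) unital ring and let Q⁺, b⁺, f⁺, R⁺ ∈ A satisfy Q⁺b⁺ − b⁺Q⁺ = f⁺, b⁺f⁺ + f⁺b⁺ = 2R⁺, and b⁺R⁺ = R⁺b⁺. Then for every natural number m ≥ 2, Q⁺(b⁺)^m = (b⁺)^m Q⁺ + ((1 − (−1)^m)/2) f⁺ (b⁺)^{m−1} + 2(⌊(m−2)/2⌋ + 1)(b⁺)^{m−2} R⁺, where ⌊·⌋ denotes the integer part and (1 − (−1)^m)/2 equals 1 if m is odd and 0 if m is even. -/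
/-!
Since `Q⁺b⁺ − b⁺Q⁺ = f⁺` and the anticommutator `{b⁺, f⁺} = 2R⁺` commutes with `b⁺`, the square
`c = (b⁺)²` commutes with `f⁺` and `R⁺`, and `Q⁺c = cQ⁺ + 2R⁺`. Commuting `Q⁺` through `cᵏ` one
factor at a time then gives `Q⁺cᵏ⁺¹ = cᵏ⁺¹Q⁺ + 2(k + 1)cᵏR⁺`, which is the even case; one more
factor `b⁺` contributes the extra term `f⁺(b⁺)^{m−1}` in the odd case.
-/

theorem mul_pow_succ_eq_of_mul_eq_add {A : Type*} [Semiring A] {q c x : A}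
    (hq : q * c = c * q + x) (hx : Commute c x) (k : ℕ) :
    q * c ^ (k + 1) = c ^ (k + 1) * q + ((k + 1 : ℕ) : A) * c ^ k * x := by
  induction k with
  | zero => simpa using hq
  | succ k ih =>
    calc q * c ^ (k + 1 + 1) = (q * c ^ (k + 1)) * c := by rw [pow_succ, mul_assoc]
      _ = c ^ (k + 1) * (q * c) + ((k + 1 : ℕ) : A) * (c ^ k * (x * c)) := by
          rw [ih]; simp only [add_mul, mul_assoc]
      _ = c ^ (k + 1 + 1) * q + ((k + 1 + 1 : ℕ) : A) * c ^ (k + 1) * x := by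
          rw [hq, ← hx.eq, ← mul_assoc (c ^ k), ← pow_succ, Nat.cast_succ (k + 1)]
          simp only [mul_add, add_mul, one_mul, ← mul_assoc, ← pow_succ]
          abel

theorem Commute.sq_left_of_commute_anticomm {A : Type*} [Ring A] {b f : A}
    (h : Commute b (b * f + f * b)) : Commute (b ^ 2) f := by
  have hdiff : b ^ 2 * f - f * b ^ 2 = b * (b * f + f * b) - (b * f + f * b) * b := by
    noncomm_ring
  rw [h.eq, sub_self, sub_eq_zero] at hdiff
  exact hdiff

section

variable {A : Type*} [Ring A] {Q b f R : A}

theorem mul_pow_two_mul_add_two (h1 : Q * b - b * Q = f) (h2 : b * f + f * b = 2 * R)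
    (h3 : Commute b R) (k : ℕ) :
    Q * b ^ (2 * k + 2) = b ^ (2 * k + 2) * Q + ((2 * k + 2 : ℕ) : A) * b ^ (2 * k) * R := by
  have hsq : Q * b ^ 2 = b ^ 2 * Q + 2 * R := by
    rw [← h2, ← h1]; noncomm_ring
  have hR : Commute (b ^ 2) (2 * R) := (Commute.ofNat_right b 2).mul_right h3 |>.pow_left 2
  have := mul_pow_succ_eq_of_mul_eq_add hsq hR k
  rw [← pow_mul, ← pow_mul, mul_add, mul_one] at this
  rw [this]
  push_cast
  noncomm_ring

theorem mul_pow_two_mul_add_three (h1 : Q * b - b * Q = f) (h2 : b * f + f * b = 2 * R)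
    (h3 : Commute b R) (k : ℕ) :
    Q * b ^ (2 * k + 3) = b ^ (2 * k + 3) * Q + f * b ^ (2 * k + 2)
      + ((2 * k + 2 : ℕ) : A) * b ^ (2 * k + 1) * R := by
  have hQ : Q * b = b * Q + f := by rw [← h1, add_sub_cancel]
  have hf : Commute (b ^ (2 * k + 2)) f := by
    have hanti : Commute b (b * f + f * b) := h2 ▸ (Commute.ofNat_right b 2).mul_right h3
    rw [show 2 * k + 2 = 2 * (k + 1) by ring, pow_mul]
    exact hanti.sq_left_of_commute_anticomm.pow_left (k + 1)
  calc Q * b ^ (2 * k + 3) = (Q * b ^ (2 * k + 2)) * b := by rw [mul_assoc, ← pow_succ]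
    _ = b ^ (2 * k + 2) * (Q * b) + ((2 * k + 2 : ℕ) : A) * b ^ (2 * k) * (R * b) := by
        rw [mul_pow_two_mul_add_two h1 h2 h3]; noncomm_ring
    _ = b ^ (2 * k + 3) * Q + f * b ^ (2 * k + 2)
          + ((2 * k + 2 : ℕ) : A) * b ^ (2 * k + 1) * R := by
        rw [hQ, ← h3.eq, mul_add, ← hf.eq, pow_succ b (2 * k + 2), pow_succ b (2 * k)]
        noncomm_ring

end

/-- If `Q⁺b⁺ − b⁺Q⁺ = f⁺`, `b⁺f⁺ + f⁺b⁺ = 2R⁺` and `b⁺R⁺ = R⁺b⁺` in a unital ring,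
then for every `m ≥ 2`,
`Q⁺(b⁺)^m = (b⁺)^m Q⁺ + ((1 − (−1)^m)/2) f⁺ (b⁺)^{m−1} + 2(⌊(m−2)/2⌋ + 1)(b⁺)^{m−2} R⁺`. -/
theorem Qplus_bplus_pow_closed {A : Type*} [Ring A] (Qp bp fp Rp : A)
    (h1 : Qp * bp - bp * Qp = fp) (h2 : bp * fp + fp * bp = 2 * Rp)
    (h3 : bp * Rp = Rp * bp)
    (m : ℕ) (hm : 2 ≤ m) :
    Qp * bp ^ m
      = bp ^ m * Qp
        + (((1 - (-1 : ℤ) ^ m) / 2 : ℤ) : A) * fp * bp ^ (m - 1)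
        + ((2 * ((m - 2) / 2 + 1) : ℕ) : A) * bp ^ (m - 2) * Rp := by
  obtain ⟨n, rfl⟩ := Nat.exists_eq_add_of_le' hm
  rcases Nat.even_or_odd' n with ⟨k, rfl | rfl⟩
  · have hsign : (-1 : ℤ) ^ (2 * k + 2) = 1 := Even.neg_one_pow ⟨k + 1, by ring⟩
    have hcoeff : 2 * ((2 * k + 2 - 2) / 2 + 1) = 2 * k + 2 := by omega
    rw [hsign, hcoeff, Nat.add_sub_cancel, mul_pow_two_mul_add_two h1 h2 h3]
    simp
  · have hsign : (-1 : ℤ) ^ (2 * k + 1 + 2) = -1 := Odd.neg_one_pow ⟨k + 1, by ring⟩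
    have hcoeff : 2 * ((2 * k + 1 + 2 - 2) / 2 + 1) = 2 * k + 2 := by omega
    rw [hsign, hcoeff, Nat.add_sub_cancel, show 2 * k + 1 + 2 - 1 = 2 * k + 2 by omega,
      show 2 * k + 1 + 2 = 2 * k + 3 by ring, mul_pow_two_mul_add_three h1 h2 h3]
    simp
end

section
/- Define the linear operator Q⁻ := ½(b⁺∘f⁻ + f⁻∘b⁺) on V. Then for all integers m ≥ 0 and 0 ≤ n ≤ p: Q⁻φ_{m,n} = (−1)^{n−1} n φ_{m+1,n−1} + (−1)ⁿ n(n−1) ψ_{m+1,n−1}, and for all integers m ≥ 1 and 1 ≤ n ≤ p: Q⁻ψ_{m,n} = (−1)^{n−1} φ_{m+1,n−1} + (−1)ⁿ (n−1) ψ_{m+1,n−1}. Consequently Q⁻φ_{m,n} = n·(Q⁻ψ_{m,n}) for all m ≥ 1, 1 ≤ n ≤ p, and Q⁻∘Q⁻ = 0 as an operator on V. -/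
/-!
Everything reduces to evaluating `b⁺` and `f⁻` on basis vectors; the convention
`ψ_{m,p} = φ_{m,p}/p` is exactly what makes the generic formulas for `ψ_{m,n}` remain valid at
`n = p`. The resulting formulas show that `Q⁻φ_{m,n}` and `Q⁻ψ_{m,n}` are both multiples of
`φ_{m+1,n-1} - (n-1) ψ_{m+1,n-1}`, while `Q⁻` annihilates `φ_{m,k} - k ψ_{m,k}` for `m ≥ 1`;
hence `Q⁻ ∘ Q⁻ = 0`.
-/

open scoped BigOperators

/-- Indices of the basis vectors `φ_{m,n}`: pairs `(m,n)` of naturals with `n ≤ p`. -/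
abbrev PhiIdx (p : ℕ) := {mn : ℕ × ℕ // mn.2 ≤ p}

/-- Indices of the basis vectors `ψ_{m,n}`: pairs `(m,n)` of naturals with
`1 ≤ m` and `1 ≤ n ≤ p - 1`. -/
abbrev PsiIdx (p : ℕ) := {mn : ℕ × ℕ // 1 ≤ mn.1 ∧ 1 ≤ mn.2 ∧ mn.2 + 1 ≤ p}

/-- The index set of the basis of the Fock-like carrier space. -/
abbrev FockIdx (p : ℕ) := PhiIdx p ⊕ PsiIdx p

/-- The Fock-like carrier space: the free `ℂ`-vector space on the basis
`{φ_{m,n} : m ≥ 0, 0 ≤ n ≤ p} ∪ {ψ_{m,n} : m ≥ 1, 1 ≤ n ≤ p−1}`. -/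
abbrev FockV (p : ℕ) := FockIdx p →₀ ℂ

/-- The vector `φ_{m,n}`, extended by `0` outside the range `m ≥ 0`, `0 ≤ n ≤ p`. -/
noncomputable def phi (p : ℕ) (m n : ℤ) : FockV p :=
  if h : 0 ≤ m ∧ 0 ≤ n ∧ n ≤ (p : ℤ) then
    Finsupp.single (Sum.inl ⟨(m.toNat, n.toNat), by show n.toNat ≤ p; omega⟩) 1
  else 0

/-- The vector `ψ_{m,n}`, extended by the conventions `ψ_{m,0} = ψ_{0,n} = 0`,
`ψ_{m,p} = (1/p)·φ_{m,p}` (for `m ≥ 1`) and `ψ_{m,n} = 0` outside the range. -/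
noncomputable def psi (p : ℕ) (m n : ℤ) : FockV p :=
  if h : 1 ≤ m ∧ 1 ≤ n ∧ n ≤ (p : ℤ) - 1 then
    Finsupp.single (Sum.inr ⟨(m.toNat, n.toNat),
      ⟨by show 1 ≤ m.toNat; omega, by show 1 ≤ n.toNat; omega,
       by show n.toNat + 1 ≤ p; omega⟩⟩) 1
  else if 1 ≤ m ∧ n = (p : ℤ) then (1 / (p : ℂ)) • phi p m n
  else 0

/-- Image of the basis vector `φ_{m,n}` under `b⁺`. -/
noncomputable def bpPhi (p : ℕ) (m n : ℤ) : FockV p :=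
  ((-1 : ℂ) ^ n) • phi p (m + 1) n - (2 * (n : ℂ) * (-1 : ℂ) ^ n) • psi p (m + 1) n

/-- Image of the basis vector `ψ_{m,n}` under `b⁺`. -/
noncomputable def bpPsi (p : ℕ) (m n : ℤ) : FockV p :=
  (-(-1 : ℂ) ^ n) • psi p (m + 1) n

/-- Image of the basis vector `φ_{m,n}` under `b⁻`. -/
noncomputable def bmPhi (p : ℕ) (m n : ℤ) : FockV p :=
  if Even m then
    ((-1 : ℂ) ^ n * (m : ℂ)) • phi p (m - 1) n
      - (2 * (-1 : ℂ) ^ n * (n : ℂ) * (m : ℂ)) • psi p (m - 1) n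
  else
    (-(-1 : ℂ) ^ n * (2 * (n : ℂ) - (m : ℂ) - ((p : ℂ) - 1))) • phi p (m - 1) n
      - (2 * (-1 : ℂ) ^ n * (n : ℂ) * ((m : ℂ) - 1)) • psi p (m - 1) n

/-- Image of the basis vector `ψ_{m,n}` under `b⁻`. -/
noncomputable def bmPsi (p : ℕ) (m n : ℤ) : FockV p :=
  if Even m then
    (-(-1 : ℂ) ^ n) • phi p (m - 1) n
      + ((-1 : ℂ) ^ n * (2 * (n : ℂ) - (m : ℂ) - (p : ℂ))) • psi p (m - 1) n
  else
    (-(-1 : ℂ) ^ n) • phi p (m - 1) n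
      - ((-1 : ℂ) ^ n * ((m : ℂ) - 1)) • psi p (m - 1) n

/-- Image of the basis vector `φ_{m,n}` under `f⁺`. -/
noncomputable def fpPhi (p : ℕ) (m n : ℤ) : FockV p := phi p m (n + 1)

/-- Image of the basis vector `ψ_{m,n}` under `f⁺`. -/
noncomputable def fpPsi (p : ℕ) (m n : ℤ) : FockV p := psi p m (n + 1)

/-- Image of the basis vector `φ_{m,n}` under `f⁻`. -/
noncomputable def fmPhi (p : ℕ) (m n : ℤ) : FockV p :=
  ((n : ℂ) * ((p : ℂ) + 1 - (n : ℂ))) • phi p m (n - 1)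

/-- Image of the basis vector `ψ_{m,n}` under `f⁻`. -/
noncomputable def fmPsi (p : ℕ) (m n : ℤ) : FockV p :=
  phi p m (n - 1) + (((n : ℂ) - 1) * ((p : ℂ) - (n : ℂ))) • psi p m (n - 1)

/-- The linear operator on the Fock-like space determined by its values `F m n`
on the basis vectors `φ_{m,n}` and `G m n` on the basis vectors `ψ_{m,n}`. -/
noncomputable def mkOp (p : ℕ) (F G : ℤ → ℤ → FockV p) : Module.End ℂ (FockV p) :=
  Finsupp.lift (FockV p) ℂ (FockIdx p) fun x =>
    match x with
    | Sum.inl a => F (a.1.1 : ℤ) (a.1.2 : ℤ)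
    | Sum.inr a => G (a.1.1 : ℤ) (a.1.2 : ℤ)

/-- The operator `b⁺`. -/
noncomputable def opBp (p : ℕ) : Module.End ℂ (FockV p) := mkOp p (bpPhi p) (bpPsi p)

/-- The operator `b⁻`. -/
noncomputable def opBm (p : ℕ) : Module.End ℂ (FockV p) := mkOp p (bmPhi p) (bmPsi p)

/-- The operator `f⁺`. -/
noncomputable def opFp (p : ℕ) : Module.End ℂ (FockV p) := mkOp p (fpPhi p) (fpPsi p)

/-- The operator `f⁻`. -/
noncomputable def opFm (p : ℕ) : Module.End ℂ (FockV p) := mkOp p (fmPhi p) (fmPsi p)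

/-- `b^ξ` for a sign `ξ`: `b 1 = b⁺`, `b (-1) = b⁻`. -/
noncomputable def opB (p : ℕ) (ξ : ℤ) : Module.End ℂ (FockV p) :=
  if ξ = 1 then opBp p else opBm p

/-- `f^ξ` for a sign `ξ`: `f 1 = f⁺`, `f (-1) = f⁻`. -/
noncomputable def opF (p : ℕ) (ξ : ℤ) : Module.End ℂ (FockV p) :=
  if ξ = 1 then opFp p else opFm p

/-- The commutator `[X, Y] = X∘Y − Y∘X` of operators. -/
noncomputable def opComm {p : ℕ} (X Y : Module.End ℂ (FockV p)) : Module.End ℂ (FockV p) :=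
  X * Y - Y * X

/-- The anticommutator `{X, Y} = X∘Y + Y∘X` of operators. -/
noncomputable def opAComm {p : ℕ} (X Y : Module.End ℂ (FockV p)) : Module.End ℂ (FockV p) :=
  X * Y + Y * X

/-- The operator `Q⁻ := ½(b⁺∘f⁻ + f⁻∘b⁺)`. -/
noncomputable def opQm (p : ℕ) : Module.End ℂ (FockV p) :=
  (1 / 2 : ℂ) • (opBp p * opFm p + opFm p * opBp p)

lemma neg_one_zpow_sub_one {α : Type*} [DivisionRing α] (n : ℤ) :
    (-1 : α) ^ (n - 1) = -(-1 : α) ^ n := by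
  rw [zpow_sub_one₀ (by norm_num), inv_neg, inv_one, mul_neg_one]

namespace Fock

variable {p : ℕ}

lemma mkOp_single_inl (F G : ℤ → ℤ → FockV p) (a : PhiIdx p) :
    mkOp p F G (Finsupp.single (Sum.inl a) 1) = F a.1.1 a.1.2 := by
  simp [mkOp]

lemma mkOp_single_inr (F G : ℤ → ℤ → FockV p) (a : PsiIdx p) :
    mkOp p F G (Finsupp.single (Sum.inr a) 1) = G a.1.1 a.1.2 := by
  simp [mkOp]

lemma phi_natCast (m n : ℕ) (h : n ≤ p) :
    phi p m n = Finsupp.single (Sum.inl ⟨(m, n), h⟩) 1 := by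
  rw [phi, dif_pos ⟨m.cast_nonneg, n.cast_nonneg, by exact_mod_cast h⟩]
  simp

lemma psi_natCast (m n : ℕ) (hm : 1 ≤ m) (hn : 1 ≤ n) (hnp : n + 1 ≤ p) :
    psi p m n = Finsupp.single (Sum.inr ⟨(m, n), hm, hn, hnp⟩) 1 := by
  rw [psi, dif_pos ⟨by exact_mod_cast hm, by exact_mod_cast hn, by omega⟩]
  simp

lemma phi_eq_zero {m n : ℤ} (h : m < 0 ∨ n < 0 ∨ (p : ℤ) < n) : phi p m n = 0 := by
  rw [phi, dif_neg (by omega)]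

lemma psi_eq_zero {m n : ℤ} (h : m < 1 ∨ n < 1 ∨ (p : ℤ) < n) : psi p m n = 0 := by
  rw [psi, dif_neg (by omega)]
  split_ifs with htop
  · obtain rfl : p = 0 := by omega
    simp
  · rfl

lemma psi_top {m : ℤ} (hm : 1 ≤ m) : psi p m p = (1 / (p : ℂ)) • phi p m p := by
  rw [psi, dif_neg (by omega), if_pos ⟨hm, rfl⟩]

lemma opBp_phi {m : ℤ} (hm : 0 ≤ m) (n : ℤ) : opBp p (phi p m n) = bpPhi p m n := by
  by_cases hn : 0 ≤ n ∧ n ≤ (p : ℤ)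
  · lift m to ℕ using hm
    lift n to ℕ using hn.1
    rw [phi_natCast m n (by exact_mod_cast hn.2), opBp, mkOp_single_inl]
  · rw [phi_eq_zero (by omega), map_zero, bpPhi, phi_eq_zero (by omega),
      psi_eq_zero (by omega), smul_zero, smul_zero, sub_zero]

lemma opFm_phi {m : ℤ} (hm : 0 ≤ m) (n : ℤ) : opFm p (phi p m n) = fmPhi p m n := by
  by_cases hn : 0 ≤ n ∧ n ≤ (p : ℤ)
  · lift m to ℕ using hm
    lift n to ℕ using hn.1
    rw [phi_natCast m n (by exact_mod_cast hn.2), opFm, mkOp_single_inl]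
  · rw [phi_eq_zero (by omega), map_zero, fmPhi]
    by_cases hnp : n = (p : ℤ) + 1
    · subst hnp
      push_cast
      simp
    · rw [phi_eq_zero (by omega), smul_zero]

lemma opBp_psi {m : ℤ} (hm : 1 ≤ m) (n : ℤ) : opBp p (psi p m n) = bpPsi p m n := by
  by_cases hn : 1 ≤ n ∧ n ≤ (p : ℤ) - 1
  · lift m to ℕ using by omega
    lift n to ℕ using by omega
    rw [psi_natCast m n (by exact_mod_cast hm) (by exact_mod_cast hn.1) (by omega), opBp,
      mkOp_single_inr]
  by_cases hnp : n = (p : ℤ)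
  · subst hnp
    rcases eq_or_ne p 0 with rfl | hp
    · rw [psi_eq_zero (by omega), map_zero, bpPsi, psi_eq_zero (by omega), smul_zero]
    rw [psi_top hm, map_smul, opBp_phi (by omega), bpPhi, bpPsi, psi_top (by omega)]
    match_scalars
    field_simp
    ring
  · rw [psi_eq_zero (by omega), map_zero, bpPsi, psi_eq_zero (by omega), smul_zero]

lemma opFm_psi {m n : ℤ} (hm : 1 ≤ m) (hnp : n ≤ p) : opFm p (psi p m n) = fmPsi p m n := by
  by_cases hn : 1 ≤ n ∧ n ≤ (p : ℤ) - 1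
  · lift m to ℕ using by omega
    lift n to ℕ using by omega
    rw [psi_natCast m n (by exact_mod_cast hm) (by exact_mod_cast hn.1) (by omega), opFm,
      mkOp_single_inr]
  by_cases hn0 : n < 1
  · rw [psi_eq_zero (by omega), map_zero, fmPsi, phi_eq_zero (by omega),
      psi_eq_zero (by omega), smul_zero, add_zero]
  obtain rfl : n = p := by omega
  have hp : (p : ℂ) ≠ 0 := by exact_mod_cast (show p ≠ 0 by omega)
  rw [psi_top hm, map_smul, opFm_phi (by omega), fmPhi, fmPsi]
  match_scalars <;> field_simp <;> ring

lemma opQm_phi {m n : ℤ} (hm : 0 ≤ m) (hnp : n ≤ p) :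
    opQm p (phi p m n)
      = ((-1 : ℂ) ^ (n - 1) * (n : ℂ)) • phi p (m + 1) (n - 1)
        + ((-1 : ℂ) ^ n * (n : ℂ) * ((n : ℂ) - 1)) • psi p (m + 1) (n - 1) := by
  simp only [opQm, LinearMap.smul_apply, LinearMap.add_apply, Module.End.mul_apply]
  rw [opFm_phi hm, opBp_phi hm, fmPhi, bpPhi]
  simp only [map_sub, map_smul]
  rw [opBp_phi hm, opFm_phi (by omega), opFm_psi (by omega) hnp]
  simp only [bpPhi, fmPhi, fmPsi, neg_one_zpow_sub_one]
  push_cast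
  match_scalars <;> ring

lemma opQm_psi {m n : ℤ} (hm : 1 ≤ m) (hnp : n ≤ p) :
    opQm p (psi p m n)
      = ((-1 : ℂ) ^ (n - 1)) • phi p (m + 1) (n - 1)
        + ((-1 : ℂ) ^ n * ((n : ℂ) - 1)) • psi p (m + 1) (n - 1) := by
  simp only [opQm, LinearMap.smul_apply, LinearMap.add_apply, Module.End.mul_apply]
  rw [opFm_psi hm hnp, opBp_psi hm, fmPsi, bpPsi]
  simp only [map_add, map_smul]
  rw [opBp_phi (by omega), opBp_psi hm, opFm_psi (by omega) hnp]
  simp only [bpPhi, bpPsi, fmPsi, neg_one_zpow_sub_one]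
  push_cast
  match_scalars <;> ring

lemma opQm_phi_sub_smul_psi {m n : ℤ} (hm : 1 ≤ m) (hnp : n ≤ p) :
    opQm p (phi p m n - (n : ℂ) • psi p m n) = 0 := by
  rw [map_sub, map_smul, opQm_phi (by omega) hnp, opQm_psi hm hnp]
  match_scalars <;> ring

lemma opQm_mul_self : opQm p * opQm p = 0 := by
  have hphi : ∀ {m n : ℤ}, 0 ≤ m → n ≤ p → opQm p (phi p m n)
      = ((-1 : ℂ) ^ (n - 1) * n) •
          (phi p (m + 1) (n - 1) - ((n - 1 : ℤ) : ℂ) • psi p (m + 1) (n - 1)) := by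
    intro m n hm hnp
    rw [opQm_phi hm hnp, neg_one_zpow_sub_one]
    push_cast
    match_scalars <;> ring
  have hpsi : ∀ {m n : ℤ}, 1 ≤ m → n ≤ p → opQm p (psi p m n)
      = (-1 : ℂ) ^ (n - 1) •
          (phi p (m + 1) (n - 1) - ((n - 1 : ℤ) : ℂ) • psi p (m + 1) (n - 1)) := by
    intro m n hm hnp
    rw [opQm_psi hm hnp, neg_one_zpow_sub_one]
    push_cast
    match_scalars <;> ring
  refine Finsupp.basisSingleOne.ext fun x => ?_
  simp only [Finsupp.coe_basisSingleOne, Module.End.mul_apply, LinearMap.zero_apply]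
  rcases x with ⟨⟨m, n⟩, hnp⟩ | ⟨⟨m, n⟩, hm, hn, hnp⟩
  · rw [← phi_natCast m n hnp, hphi (by positivity) (by exact_mod_cast hnp), map_smul,
      opQm_phi_sub_smul_psi (by omega) (by omega), smul_zero]
  · rw [← psi_natCast m n hm hn hnp, hpsi (by exact_mod_cast hm) (by omega), map_smul,
      opQm_phi_sub_smul_psi (by omega) (by omega), smul_zero]

end Fock

open Fock in
theorem Qminus_action_general (p : ℕ) :
    (∀ m n : ℤ, 0 ≤ m → 0 ≤ n → n ≤ (p : ℤ) →
      opQm p (phi p m n)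
        = ((-1 : ℂ) ^ (n - 1) * (n : ℂ)) • phi p (m + 1) (n - 1)
          + ((-1 : ℂ) ^ n * (n : ℂ) * ((n : ℂ) - 1)) • psi p (m + 1) (n - 1)) ∧
    (∀ m n : ℤ, 1 ≤ m → 1 ≤ n → n ≤ (p : ℤ) →
      opQm p (psi p m n)
        = ((-1 : ℂ) ^ (n - 1)) • phi p (m + 1) (n - 1)
          + ((-1 : ℂ) ^ n * ((n : ℂ) - 1)) • psi p (m + 1) (n - 1)) ∧
    (∀ m n : ℤ, 1 ≤ m → 1 ≤ n → n ≤ (p : ℤ) →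
      opQm p (phi p m n) = (n : ℂ) • opQm p (psi p m n)) ∧
    opQm p * opQm p = 0 :=
  ⟨fun _ _ hm _ hnp => opQm_phi hm hnp,
    fun _ _ hm _ hnp => opQm_psi hm hnp,
    fun _ _ hm _ hnp => by
      rw [← sub_eq_zero, ← map_smul, ← map_sub, opQm_phi_sub_smul_psi hm hnp],
    opQm_mul_self⟩

/-- Action of `Q⁻` on the basis vectors, the proportionality
`Q⁻φ_{m,n} = n·(Q⁻ψ_{m,n})`, and the nilpotency `(Q⁻)² = 0`. -/
theorem Qminus_action (p : ℕ) (hp : 1 ≤ p) :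
    (∀ m n : ℤ, 0 ≤ m → 0 ≤ n → n ≤ (p : ℤ) →
      opQm p (phi p m n)
        = ((-1 : ℂ) ^ (n - 1) * (n : ℂ)) • phi p (m + 1) (n - 1)
          + ((-1 : ℂ) ^ n * (n : ℂ) * ((n : ℂ) - 1)) • psi p (m + 1) (n - 1)) ∧
    (∀ m n : ℤ, 1 ≤ m → 1 ≤ n → n ≤ (p : ℤ) →
      opQm p (psi p m n)
        = ((-1 : ℂ) ^ (n - 1)) • phi p (m + 1) (n - 1)
          + ((-1 : ℂ) ^ n * ((n : ℂ) - 1)) • psi p (m + 1) (n - 1)) ∧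
    (∀ m n : ℤ, 1 ≤ m → 1 ≤ n → n ≤ (p : ℤ) →
      opQm p (phi p m n) = (n : ℂ) • opQm p (psi p m n)) ∧
    opQm p * opQm p = 0 :=
  Qminus_action_general p
end

section
/- Define on V the operators Q⁻ := ½(b⁺∘f⁻ + f⁻∘b⁺), Q⁺ := ½(b⁻∘f⁺ + f⁺∘b⁻), N_b := ½(b⁺∘b⁻ + b⁻∘b⁺) − (p/2)·id, N_f := ½(f⁺∘f⁻ − f⁻∘f⁺) + (p/2)·id. For each integer k ≥ 0 let W_k ⊆ V be the linear span of { φ_{m,n} : m ≥ 0, 0 ≤ n ≤ p, m+n = k+p } ∪ { ψ_{m,n} : m ≥ 1, 1 ≤ n ≤ p−1, m+n = k+p }, and for each 0 ≤ s ≤ p−1 let U_s ⊆ V be the linear span of { φ_{m,n} : m ≥ 0, 0 ≤ n ≤ p, m+n = s } ∪ { ψ_{m,n} : m ≥ 1, 1 ≤ n ≤ p−1, m+n = s }. Then: (i) each W_k and each U_s is invariant under Q⁺, Q⁻, N_b and N_f; (ii) dim_ℂ W_k = 2p for every k ≥ 0, dim_ℂ U_s = 2s for 1 ≤ s ≤ p−1,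 and dim_ℂ U_0 = 1; (iii) V is the internal direct sum V = (⊕_{k≥0} W_k) ⊕ (⊕_{s=0}^{p−1} U_s); in particular the representation of any Lie superalgebra acting through linear combinations of id, N_b, N_f, Q⁺, Q⁻ on V is decomposable. -/
open scoped BigOperators

/-- The operator `Q⁺ := ½(b⁻∘f⁺ + f⁺∘b⁻)`. -/
noncomputable def opQp (p : ℕ) : Module.End ℂ (FockV p) :=
  (1 / 2 : ℂ) • (opBm p * opFp p + opFp p * opBm p)

/-- The number operator `N_b := ½(b⁺∘b⁻ + b⁻∘b⁺) − (p/2)·id`. -/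
noncomputable def opNb (p : ℕ) : Module.End ℂ (FockV p) :=
  (1 / 2 : ℂ) • (opBp p * opBm p + opBm p * opBp p) - ((p : ℂ) / 2) • 1

/-- The number operator `N_f := ½(f⁺∘f⁻ − f⁻∘f⁺) + (p/2)·id`. -/
noncomputable def opNf (p : ℕ) : Module.End ℂ (FockV p) :=
  (1 / 2 : ℂ) • (opFp p * opFm p - opFm p * opFp p) + ((p : ℂ) / 2) • 1

/-- The subspace `W_k`, spanned by the basis vectors `φ_{m,n}`, `ψ_{m,n}` with
`m + n = k + p`. -/
noncomputable def Wsub (p k : ℕ) : Submodule ℂ (FockV p) :=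
  Submodule.span ℂ
    ({v | (∃ m n : ℤ, 0 ≤ m ∧ 0 ≤ n ∧ n ≤ (p : ℤ) ∧ m + n = (k : ℤ) + (p : ℤ) ∧ v = phi p m n)
        ∨ (∃ m n : ℤ, 1 ≤ m ∧ 1 ≤ n ∧ n ≤ (p : ℤ) - 1 ∧ m + n = (k : ℤ) + (p : ℤ) ∧
            v = psi p m n)} : Set (FockV p))

/-- The subspace `U_s`, spanned by the basis vectors `φ_{m,n}`, `ψ_{m,n}` with
`m + n = s`. -/
noncomputable def Usub (p s : ℕ) : Submodule ℂ (FockV p) :=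
  Submodule.span ℂ
    ({v | (∃ m n : ℤ, 0 ≤ m ∧ 0 ≤ n ∧ n ≤ (p : ℤ) ∧ m + n = (s : ℤ) ∧ v = phi p m n)
        ∨ (∃ m n : ℤ, 1 ≤ m ∧ 1 ≤ n ∧ n ≤ (p : ℤ) - 1 ∧ m + n = (s : ℤ) ∧
            v = psi p m n)} : Set (FockV p))

/-! Grade `V` by giving `φ_{m,n}` and `ψ_{m,n}` the degree `m + n` (the conventions for
out-of-range indices respect this). Then `b⁺, f⁺` raise and `b⁻, f⁻` lower the degree by one,
so `Q^±`, `N_b`, `N_f` preserve every homogeneous component. `W_k` and `U_s` are precisely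
the components of degrees `k + p` and `s`, and every degree `d ≥ 0` occurs exactly once, whence
the direct sum. A basis vector of degree `d` is determined by `n`, which ranges over
`0 ≤ n ≤ min d p` for `φ` and over `1 ≤ n ≤ min (d - 1) (p - 1)` for `ψ`; this gives
`2p`, `2s` and `1` for the dimensions. -/

namespace Finsupp

section Ring

variable {α ι κ R M : Type*} [Ring R] [AddCommGroup M] [Module R M]

theorem isInternal_supported_fibers [DecidableEq ι] (deg : α → κ) {e : ι → κ}
    (he : Function.Injective e) (hdeg : ∀ a, deg a ∈ Set.range e) :
    DirectSum.IsInternal fun i => supported M R (deg ⁻¹' {e i}) := by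
  apply DirectSum.isInternal_submodule_of_iSupIndep_of_iSup_eq_top
  · intro i
    have hdisj : Disjoint (deg ⁻¹' {e i}) (⋃ j ≠ i, deg ⁻¹' {e j}) := by
      simp only [Set.disjoint_left, Set.mem_preimage, Set.mem_singleton_iff, Set.mem_iUnion]
      rintro a ha ⟨j, hji, hj⟩
      exact hji (he (hj.symm.trans ha))
    refine (disjoint_supported_supported hdisj).mono_right ?_
    exact iSup₂_le fun j hj =>
      supported_mono (Set.subset_biUnion_of_mem (u := fun j => deg ⁻¹' {e j}) hj)
  · have hcover : (⋃ i, deg ⁻¹' {e i}) = Set.univ :=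
      Set.eq_univ_of_forall fun a => by
        obtain ⟨i, hi⟩ := hdeg a
        exact Set.mem_iUnion.mpr ⟨i, hi.symm⟩
    rw [← supported_iUnion, hcover, supported_univ]

end Ring

theorem finrank_supported_self {α R : Type*} [Semiring R] [StrongRankCondition R] (s : Set α) :
    Module.finrank R (supported R R s) = Nat.card s := by
  rw [(supportedEquivFinsupp s).finrank_eq, Module.finrank, rank_finsupp_self,
    Cardinal.toNat_lift, Nat.card]

end Finsupp

section ShiftsDegree

variable {ι R M : Type*} [AddMonoid ι] [CommSemiring R] [AddCommMonoid M] [Module R M]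

def ShiftsDegree (A : ι → Submodule R M) (δ : ι) (T : Module.End R M) : Prop :=
  ∀ i, ∀ x ∈ A i, T x ∈ A (i + δ)

variable {A : ι → Submodule R M} {δ δ₁ δ₂ : ι} {S T : Module.End R M}

theorem ShiftsDegree.one : ShiftsDegree A 0 1 := fun i x hx => by simpa using hx

theorem ShiftsDegree.mul (hS : ShiftsDegree A δ₁ S) (hT : ShiftsDegree A δ₂ T)
    (hδ : δ₂ + δ₁ = δ) : ShiftsDegree A δ (S * T) := fun i x hx => by
  simpa [← hδ, add_assoc] using hS _ _ (hT i x hx)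

theorem ShiftsDegree.add (hS : ShiftsDegree A δ S) (hT : ShiftsDegree A δ T) :
    ShiftsDegree A δ (S + T) := fun i x hx => add_mem (hS i x hx) (hT i x hx)

theorem ShiftsDegree.smul (c : R) (hT : ShiftsDegree A δ T) : ShiftsDegree A δ (c • T) :=
  fun i x hx => Submodule.smul_mem _ c (hT i x hx)

theorem ShiftsDegree.map_le (hT : ShiftsDegree A 0 T) (i : ι) : (A i).map T ≤ A i := by
  rintro _ ⟨x, hx, rfl⟩
  simpa using hT i x hx

end ShiftsDegree

theorem ShiftsDegree.sub {ι R M : Type*} [AddMonoid ι] [CommRing R] [AddCommGroup M]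
    [Module R M] {A : ι → Submodule R M} {δ : ι} {S T : Module.End R M}
    (hS : ShiftsDegree A δ S) (hT : ShiftsDegree A δ T) : ShiftsDegree A δ (S - T) :=
  fun i x hx => sub_mem (hS i x hx) (hT i x hx)

def FockIdx.degree {p : ℕ} : FockIdx p → ℕ :=
  Sum.elim (fun a => a.1.1 + a.1.2) (fun a => a.1.1 + a.1.2)

noncomputable def fockComponent (p : ℕ) (d : ℤ) : Submodule ℂ (FockV p) :=
  Finsupp.supported ℂ ℂ ((fun i : FockIdx p => (i.degree : ℤ)) ⁻¹' {d})

section Components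

variable (p : ℕ)

theorem phi_mem_fockComponent {m n d : ℤ} (h : m + n = d) : phi p m n ∈ fockComponent p d := by
  unfold phi
  split_ifs with hr
  · refine Finsupp.single_mem_supported ℂ _ ?_
    simp only [Set.mem_preimage, Set.mem_singleton_iff, FockIdx.degree, Sum.elim_inl]
    push_cast
    omega
  · exact zero_mem _

theorem psi_mem_fockComponent {m n d : ℤ} (h : m + n = d) : psi p m n ∈ fockComponent p d := by
  unfold psi
  split_ifs with hr
  · refine Finsupp.single_mem_supported ℂ _ ?_
    simp only [Set.mem_preimage, Set.mem_singleton_iff, FockIdx.degree, Sum.elim_inr]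
    push_cast
    omega
  · exact Submodule.smul_mem _ _ (phi_mem_fockComponent p h)
  · exact zero_mem _

theorem phi_natCast_eq_single (a : PhiIdx p) :
    phi p a.1.1 a.1.2 = Finsupp.single (Sum.inl a) 1 := by
  rw [phi, dif_pos (by have := a.2; omega)]
  simp

theorem psi_natCast_eq_single (a : PsiIdx p) :
    psi p a.1.1 a.1.2 = Finsupp.single (Sum.inr a) 1 := by
  rw [psi, dif_pos (by have := a.2; omega)]
  simp

theorem span_phi_psi_eq_fockComponent (d : ℤ) :
    Submodule.span ℂ
      ({v | (∃ m n : ℤ, 0 ≤ m ∧ 0 ≤ n ∧ n ≤ (p : ℤ) ∧ m + n = d ∧ v = phi p m n)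
          ∨ (∃ m n : ℤ, 1 ≤ m ∧ 1 ≤ n ∧ n ≤ (p : ℤ) - 1 ∧ m + n = d ∧
              v = psi p m n)} : Set (FockV p)) = fockComponent p d := by
  apply le_antisymm
  · rw [Submodule.span_le]
    rintro _ (⟨m, n, -, -, -, rfl, rfl⟩ | ⟨m, n, -, -, -, rfl, rfl⟩)
    · exact phi_mem_fockComponent p rfl
    · exact psi_mem_fockComponent p rfl
  · rw [fockComponent, Finsupp.supported_eq_span_single, Submodule.span_le]
    rintro _ ⟨a | a, hdeg, rfl⟩ <;> apply Submodule.subset_span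
    · obtain ⟨⟨m, n⟩, hn⟩ := a
      exact Or.inl ⟨m, n, by positivity, by positivity, by exact_mod_cast hn, hdeg,
        (phi_natCast_eq_single p _).symm⟩
    · obtain ⟨⟨m, n⟩, hm, hn, hnp⟩ := a
      exact Or.inr ⟨m, n, by exact_mod_cast hm, by exact_mod_cast hn, by omega, hdeg,
        (psi_natCast_eq_single p _).symm⟩

theorem Wsub_eq_fockComponent (k : ℕ) : Wsub p k = fockComponent p (k + p) :=
  span_phi_psi_eq_fockComponent p _

theorem Usub_eq_fockComponent (s : ℕ) : Usub p s = fockComponent p s :=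
  span_phi_psi_eq_fockComponent p _

theorem shiftsDegree_mkOp {F G : ℤ → ℤ → FockV p} {δ : ℤ}
    (hF : ∀ m n, F m n ∈ fockComponent p (m + n + δ))
    (hG : ∀ m n, G m n ∈ fockComponent p (m + n + δ)) :
    ShiftsDegree (fockComponent p) δ (mkOp p F G) := by
  intro d x hx
  rw [fockComponent, Finsupp.supported_eq_span_single] at hx
  refine (Submodule.map_span_le _ _ (fockComponent p (d + δ))).mpr ?_ ⟨x, hx, rfl⟩
  rintro _ ⟨a | a, rfl, rfl⟩
  · simpa [mkOp, FockIdx.degree] using hF a.1.1 a.1.2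
  · simpa [mkOp, FockIdx.degree] using hG a.1.1 a.1.2

theorem shiftsDegree_opBp : ShiftsDegree (fockComponent p) 1 (opBp p) := by
  unfold opBp bpPhi bpPsi
  refine shiftsDegree_mkOp p (fun m n => ?_) (fun m n => ?_) <;>
    apply_rules only [sub_mem, Submodule.smul_mem, phi_mem_fockComponent, psi_mem_fockComponent] <;>
    ring

theorem shiftsDegree_opBm : ShiftsDegree (fockComponent p) (-1) (opBm p) := by
  unfold opBm bmPhi bmPsi
  refine shiftsDegree_mkOp p (fun m n => ?_) (fun m n => ?_) <;>
    split_ifs <;>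
    apply_rules only [add_mem, sub_mem, Submodule.smul_mem, phi_mem_fockComponent,
      psi_mem_fockComponent] <;>
    ring

theorem shiftsDegree_opFp : ShiftsDegree (fockComponent p) 1 (opFp p) := by
  unfold opFp fpPhi fpPsi
  refine shiftsDegree_mkOp p (fun m n => ?_) (fun m n => ?_) <;>
    apply_rules only [phi_mem_fockComponent, psi_mem_fockComponent] <;>
    ring

theorem shiftsDegree_opFm : ShiftsDegree (fockComponent p) (-1) (opFm p) := by
  unfold opFm fmPhi fmPsi
  refine shiftsDegree_mkOp p (fun m n => ?_) (fun m n => ?_) <;>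
    apply_rules only [add_mem, Submodule.smul_mem, phi_mem_fockComponent, psi_mem_fockComponent] <;>
    ring

theorem shiftsDegree_opQp : ShiftsDegree (fockComponent p) 0 (opQp p) :=
  ((shiftsDegree_opBm p).mul (shiftsDegree_opFp p) (by norm_num)).add
    ((shiftsDegree_opFp p).mul (shiftsDegree_opBm p) (by norm_num)) |>.smul _

theorem shiftsDegree_opQm : ShiftsDegree (fockComponent p) 0 (opQm p) :=
  ((shiftsDegree_opBp p).mul (shiftsDegree_opFm p) (by norm_num)).add
    ((shiftsDegree_opFm p).mul (shiftsDegree_opBp p) (by norm_num)) |>.smul _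

theorem shiftsDegree_opNb : ShiftsDegree (fockComponent p) 0 (opNb p) :=
  (((shiftsDegree_opBp p).mul (shiftsDegree_opBm p) (by norm_num)).add
    ((shiftsDegree_opBm p).mul (shiftsDegree_opBp p) (by norm_num)) |>.smul _).sub
    (ShiftsDegree.one.smul _)

theorem shiftsDegree_opNf : ShiftsDegree (fockComponent p) 0 (opNf p) :=
  (((shiftsDegree_opFp p).mul (shiftsDegree_opFm p) (by norm_num)).sub
    ((shiftsDegree_opFm p).mul (shiftsDegree_opFp p) (by norm_num)) |>.smul _).add
    (ShiftsDegree.one.smul _)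

end Components

def FockIdx.degreeFiberEquiv (p d : ℕ) :
    {i : FockIdx p // i.degree = d} ≃ Fin (min d p + 1) ⊕ Fin (min (d - 1) (p - 1)) where
  toFun
    | ⟨Sum.inl ⟨(_, n), hn⟩, h⟩ =>
      Sum.inl ⟨n, by simp only [degree, Sum.elim_inl] at h; omega⟩
    | ⟨Sum.inr ⟨(_, n), hm, hn, hnp⟩, h⟩ =>
      Sum.inr ⟨n - 1, by simp only [degree, Sum.elim_inr] at h hm hn hnp; omega⟩
  invFun
    | Sum.inl n => ⟨Sum.inl ⟨(d - n, n), by omega⟩,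
        by simp only [degree, Sum.elim_inl]; omega⟩
    | Sum.inr j => ⟨Sum.inr ⟨(d - (j + 1), j + 1), by omega, by omega, by omega⟩,
        by simp only [degree, Sum.elim_inr]; omega⟩
  left_inv := by
    rintro ⟨⟨⟨m, n⟩, -⟩ | ⟨⟨m, n⟩, -, hn, -⟩, hd⟩
    · simp only [degree, Sum.elim_inl] at hd
      ext; simp only [Sum.inl.injEq, Subtype.mk.injEq, Prod.mk.injEq, and_true]; omega
    · simp only [degree, Sum.elim_inr] at hd hn
      ext; simp only [Sum.inr.injEq, Subtype.mk.injEq, Prod.mk.injEq]; omega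
  right_inv := by
    rintro (⟨n, hn⟩ | ⟨j, hj⟩) <;> simp only [Sum.inr.injEq, Fin.mk.injEq]; omega

theorem finrank_fockComponent (p d : ℕ) :
    Module.finrank ℂ (fockComponent p d) = min d p + 1 + min (d - 1) (p - 1) := by
  have e : (fun i : FockIdx p => (i.degree : ℤ)) ⁻¹' {(d : ℤ)} ≃
      {i : FockIdx p // i.degree = d} :=
    Equiv.subtypeEquivRight fun i => by simp
  rw [fockComponent, Finsupp.finrank_supported_self,
    Nat.card_congr (e.trans (FockIdx.degreeFiberEquiv p d)), Nat.card_sum, Nat.card_fin,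
    Nat.card_fin]

def blockDegree (p : ℕ) : ℕ ⊕ Fin p → ℤ :=
  Sum.elim (fun k => k + p) (fun s => s)

theorem blockDegree_injective (p : ℕ) : Function.Injective (blockDegree p) := by
  rintro (k | s) (k' | s') h <;> simp only [blockDegree, Sum.elim_inl, Sum.elim_inr] at h
  · exact congrArg Sum.inl (by omega)
  · omega
  · omega
  · exact congrArg Sum.inr (Fin.ext (by omega))

theorem natCast_mem_range_blockDegree (p d : ℕ) : (d : ℤ) ∈ Set.range (blockDegree p) := by
  by_cases h : d < p
  · exact ⟨Sum.inr ⟨d, h⟩, rfl⟩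
  · exact ⟨Sum.inl (d - p), by simp only [blockDegree, Sum.elim_inl]; omega⟩

theorem isInternal_fockComponent_blockDegree (p : ℕ) :
    DirectSum.IsInternal fun i => fockComponent p (blockDegree p i) :=
  Finsupp.isInternal_supported_fibers _ (blockDegree_injective p)
    fun i => natCast_mem_range_blockDegree p i.degree

/-- The Fock-like carrier space decomposes: each `W_k` (`k ≥ 0`) and each `U_s`
(`0 ≤ s ≤ p−1`) is invariant under `Q⁺`, `Q⁻`, `N_b`, `N_f`; their dimensions are
`2p`, `2s` (resp. `1` for `s = 0`); and `V` is the internal direct sum of all of them.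
In particular any Lie superalgebra representation acting through linear combinations of
`id, N_b, N_f, Q⁺, Q⁻` on `V` is decomposable. -/
theorem fock_space_decomposition (p : ℕ) (hp : 1 ≤ p) :
    (∀ k : ℕ,
      Submodule.map (opQp p) (Wsub p k) ≤ Wsub p k ∧
      Submodule.map (opQm p) (Wsub p k) ≤ Wsub p k ∧
      Submodule.map (opNb p) (Wsub p k) ≤ Wsub p k ∧
      Submodule.map (opNf p) (Wsub p k) ≤ Wsub p k) ∧
    (∀ s : ℕ, s < p →
      Submodule.map (opQp p) (Usub p s) ≤ Usub p s ∧
      Submodule.map (opQm p) (Usub p s) ≤ Usub p s ∧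
      Submodule.map (opNb p) (Usub p s) ≤ Usub p s ∧
      Submodule.map (opNf p) (Usub p s) ≤ Usub p s) ∧
    (∀ k : ℕ, Module.finrank ℂ (Wsub p k) = 2 * p) ∧
    (∀ s : ℕ, 1 ≤ s → s < p → Module.finrank ℂ (Usub p s) = 2 * s) ∧
    Module.finrank ℂ (Usub p 0) = 1 ∧
    DirectSum.IsInternal (fun i : ℕ ⊕ Fin p => Sum.elim (Wsub p) (fun s => Usub p s.1) i) := by
  have invariant : ∀ d, (fockComponent p d).map (opQp p) ≤ fockComponent p d ∧
      (fockComponent p d).map (opQm p) ≤ fockComponent p d ∧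
      (fockComponent p d).map (opNb p) ≤ fockComponent p d ∧
      (fockComponent p d).map (opNf p) ≤ fockComponent p d := fun d =>
    ⟨(shiftsDegree_opQp p).map_le d, (shiftsDegree_opQm p).map_le d,
      (shiftsDegree_opNb p).map_le d, (shiftsDegree_opNf p).map_le d⟩
  have blocks : (fun i => Sum.elim (Wsub p) (fun s => Usub p s.1) i) =
      fun i => fockComponent p (blockDegree p i) := by
    funext i
    rcases i with k | s
    · exact Wsub_eq_fockComponent p k
    · exact Usub_eq_fockComponent p s
  refine ⟨fun k => ?_, fun s _ => ?_, fun k => ?_, fun s hs _ => ?_, ?_, ?_⟩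
  · rw [Wsub_eq_fockComponent]; exact invariant _
  · rw [Usub_eq_fockComponent]; exact invariant _
  · rw [Wsub_eq_fockComponent, ← Nat.cast_add, finrank_fockComponent]; omega
  · rw [Usub_eq_fockComponent, finrank_fockComponent]; omega
  · rw [Usub_eq_fockComponent, finrank_fockComponent]; omega
  · rw [blocks]; exact isInternal_fockComponent_blockDegree p
end
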